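/- arXiv:math/0512514 — 3 statements merged into one kernel-verified Lean document; each statement's English description precedes it below -/
import Mathlib

section
/- Let k be a field of characteristic zero and (R,Δ) a commutative differential k-algebra with R a finitely generated (affine) k-algebra. Then every Δ-prime ideal of R is an intersection of Δ-primitive ideals of R. -/
section Defs

variable {k R : Type*} [CommRing k] [CommRing R] [Algebra k R]

/-- An ideal stable under all derivations in `Δ`. -/
def IsDeltaIdeal (Δ : Set (Derivation k R R)) (I : Ideal R) : Prop :=
  ∀ δ ∈ Δ, ∀ x ∈ I, δ x ∈ I

/-- The `Δ`-core of an ideal `J`: the largest `Δ`-stable ideal contained in `J`. -/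
def deltaCore (Δ : Set (Derivation k R R)) (J : Ideal R) : Ideal R :=
  sSup {I : Ideal R | IsDeltaIdeal Δ I ∧ I ≤ J}

/-- A `Δ`-prime ideal: a proper `Δ`-ideal `Q` such that whenever a product of two
`Δ`-ideals lies in `Q`, one of them lies in `Q`. -/
def IsDeltaPrime (Δ : Set (Derivation k R R)) (Q : Ideal R) : Prop :=
  Q ≠ ⊤ ∧ IsDeltaIdeal Δ Q ∧
    ∀ I J : Ideal R, IsDeltaIdeal Δ I → IsDeltaIdeal Δ J → I * J ≤ Q → I ≤ Q ∨ J ≤ Q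

/-- A `Δ`-primitive ideal: the `Δ`-core of a maximal ideal. -/
def IsDeltaPrimitive (Δ : Set (Derivation k R R)) (P : Ideal R) : Prop :=
  ∃ M : Ideal R, M.IsMaximal ∧ deltaCore Δ M = P

end Defs

section AuxLemmas

variable {k R : Type*} [CommRing k] [CommRing R] [Algebra k R]

/-- Product of `Δ`-ideals is a `Δ`-ideal. -/
lemma IsDeltaIdeal.mul {Δ : Set (Derivation k R R)} {I J : Ideal R}
    (hI : IsDeltaIdeal Δ I) (hJ : IsDeltaIdeal Δ J) : IsDeltaIdeal Δ (I * J) := by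
  intro δ hδ x hx
  refine Submodule.mul_induction_on hx (fun a ha b hb => ?_) (fun x y hx' hy' => ?_)
  · rw [Derivation.leibniz]
    refine add_mem ?_ ?_
    · rw [smul_eq_mul]
      exact Ideal.mul_mem_mul ha (hJ δ hδ b hb)
    · rw [smul_eq_mul, mul_comm b (δ a)]
      exact Ideal.mul_mem_mul (hI δ hδ a ha) hb
  · rw [map_add]
    exact add_mem hx' hy'

/-- Positive powers of a `Δ`-ideal are `Δ`-ideals. -/
lemma IsDeltaIdeal.pow {Δ : Set (Derivation k R R)} {I : Ideal R}
    (hI : IsDeltaIdeal Δ I) {n : ℕ} (hn : n ≠ 0) : IsDeltaIdeal Δ (I ^ n) := by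
  induction n with
  | zero => exact absurd rfl hn
  | succ m ih =>
    cases m with
    | zero => simpa using hI
    | succ l =>
      rw [pow_succ]
      exact (ih (Nat.succ_ne_zero l)).mul hI

end AuxLemmas

section CharZero

variable {k R : Type*} [Field k] [CharZero k] [CommRing R] [Algebra k R]

/-- In a `k`-algebra with `k` a field of characteristic zero, one can cancel
nonzero natural numbers from ideal membership. -/
lemma mem_of_natCast_mul_mem' (k : Type*) {R : Type*} [Field k] [CharZero k] [CommRing R]
    [Algebra k R] {I : Ideal R} {n : ℕ} (hn : n ≠ 0) {x : R}
    (h : (n : R) * x ∈ I) : x ∈ I := by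
  have h1 : algebraMap k R ((n : k)⁻¹) * ((n : R) * x) ∈ I := I.mul_mem_left _ h
  have h2 : (n : R) = algebraMap k R ((n : k)) := by
    simp [map_natCast]
  rw [h2, ← mul_assoc, ← map_mul, inv_mul_cancel₀ (by exact_mod_cast hn), map_one,
    one_mul] at h1
  exact h1

/-- Key descent step: if `x^(a+1) * (δ x)^b ∈ I`, then `x^a * (δ x)^(b+2) ∈ I`. -/
lemma delta_step {Δ : Set (Derivation k R R)} {I : Ideal R} (hI : IsDeltaIdeal Δ I)
    {δ : Derivation k R R} (hδ : δ ∈ Δ) (x : R) (a b : ℕ)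
    (h : x ^ (a + 1) * (δ x) ^ b ∈ I) : x ^ a * (δ x) ^ (b + 2) ∈ I := by
  have hd : δ (x ^ (a + 1) * (δ x) ^ b) ∈ I := hI δ hδ _ h
  have hdy : δ (x ^ (a + 1) * (δ x) ^ b) * δ x ∈ I := I.mul_mem_right _ hd
  have ht : (x ^ (a + 1) * (δ x) ^ b) * ((b : R) * δ (δ x)) ∈ I := I.mul_mem_right _ h
  have key : ((a : R) + 1) * (x ^ a * (δ x) ^ (b + 2)) =
      δ (x ^ (a + 1) * (δ x) ^ b) * δ x -
        (x ^ (a + 1) * (δ x) ^ b) * ((b : R) * δ (δ x)) := by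
    rw [Derivation.leibniz, Derivation.leibniz_pow, Derivation.leibniz_pow]
    cases b with
    | zero => simp; ring
    | succ c =>
      simp only [Nat.add_sub_cancel, smul_eq_mul, nsmul_eq_mul]
      push_cast
      ring
  have hmem : ((a : R) + 1) * (x ^ a * (δ x) ^ (b + 2)) ∈ I := by
    rw [key]; exact I.sub_mem hdy ht
  have : ((a + 1 : ℕ) : R) * (x ^ a * (δ x) ^ (b + 2)) ∈ I := by
    push_cast; exact hmem
  exact mem_of_natCast_mul_mem' k (Nat.succ_ne_zero a) this

lemma delta_descent {Δ : Set (Derivation k R R)} {I : Ideal R} (hI : IsDeltaIdeal Δ I)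
    {δ : Derivation k R R} (hδ : δ ∈ Δ) (x : R) :
    ∀ a b : ℕ, x ^ a * (δ x) ^ b ∈ I → (δ x) ^ (b + 2 * a) ∈ I := by
  intro a
  induction a with
  | zero => intro b h; simpa using h
  | succ n ih =>
    intro b h
    have h1 : x ^ n * (δ x) ^ (b + 2) ∈ I := delta_step hI hδ x n b h
    have h2 : (δ x) ^ (b + 2 + 2 * n) ∈ I := ih (b + 2) h1
    have : b + 2 + 2 * n = b + 2 * (n + 1) := by ring
    rwa [this] at h2

/-- In characteristic zero, the radical of a `Δ`-ideal is a `Δ`-ideal. -/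
lemma IsDeltaIdeal.radical {Δ : Set (Derivation k R R)} {I : Ideal R}
    (hI : IsDeltaIdeal Δ I) : IsDeltaIdeal Δ I.radical := by
  intro δ hδ x hx
  obtain ⟨n, hn⟩ := Ideal.mem_radical_iff.mp hx
  have h0 : x ^ n * (δ x) ^ 0 ∈ I := by simpa using hn
  have := delta_descent hI hδ x n 0 h0
  exact Ideal.mem_radical_iff.mpr ⟨0 + 2 * n, this⟩

/-- A `Δ`-prime ideal contains any `Δ`-ideal a positive power of which it contains. -/
lemma IsDeltaPrime.le_of_pow_le {Δ : Set (Derivation k R R)} {Q J : Ideal R}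
    (hQ : IsDeltaPrime Δ Q) (hJ : IsDeltaIdeal Δ J) :
    ∀ n : ℕ, n ≠ 0 → J ^ n ≤ Q → J ≤ Q := by
  intro n
  induction n with
  | zero => intro h; exact absurd rfl h
  | succ m ih =>
    intro _ h
    cases m with
    | zero => simpa using h
    | succ l =>
      rw [pow_succ] at h
      rcases hQ.2.2 _ _ (hJ.pow (Nat.succ_ne_zero l)) hJ h with h' | h'
      · exact ih (Nat.succ_ne_zero l) h'
      · exact h'

end CharZero

/-- If `R` is an affine (finitely generated) `k`-algebra, every
`Δ`-prime ideal of `R` is an intersection of `Δ`-primitive ideals. -/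
theorem isDeltaPrime_eq_sInf_deltaPrimitive
    {k R : Type*} [Field k] [CharZero k] [CommRing R] [Algebra k R]
    [Algebra.FiniteType k R]
    (Δ : Set (Derivation k R R)) (Q : Ideal R) (hQ : IsDeltaPrime Δ Q) :
    ∃ S : Set (Ideal R), (∀ P ∈ S, IsDeltaPrimitive Δ P) ∧ Q = sInf S := by
  obtain ⟨hQne, hQdelta, hQmul⟩ := hQ
  haveI : IsJacobsonRing R := isJacobsonRing_of_finiteType (A := k)
  haveI : IsNoetherianRing R := Algebra.FiniteType.isNoetherianRing k R
  have hrad : Q.radical = Q := by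
    refine le_antisymm ?_ Ideal.le_radical
    obtain ⟨n, hn⟩ := Ideal.exists_radical_pow_le_of_fg Q (IsNoetherian.noetherian _)
    rcases Nat.eq_zero_or_pos n with rfl | hpos
    · rw [pow_zero, Ideal.one_eq_top, top_le_iff] at hn
      exact absurd hn hQne
    · exact IsDeltaPrime.le_of_pow_le ⟨hQne, hQdelta, hQmul⟩ hQdelta.radical n hpos.ne' hn
  refine ⟨(deltaCore Δ) '' {M : Ideal R | M.IsMaximal ∧ Q ≤ M}, ?_, ?_⟩
  · rintro P ⟨M, ⟨hM, _⟩, rfl⟩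
    exact ⟨M, hM, rfl⟩
  · refine le_antisymm ?_ ?_
    · refine le_sInf ?_
      rintro P ⟨M, ⟨hM, hQM⟩, rfl⟩
      exact le_sSup ⟨hQdelta, hQM⟩
    · have h1 : sInf ((deltaCore Δ) '' {M : Ideal R | M.IsMaximal ∧ Q ≤ M}) ≤ Q.jacobson := by
        rw [Ideal.jacobson]
        refine le_sInf ?_
        rintro M ⟨hQM, hM⟩
        exact le_trans (sInf_le ⟨M, ⟨hM, hQM⟩, rfl⟩) (sSup_le fun I hI => hI.2)
      rwa [← Ideal.radical_eq_jacobson, hrad] at h1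
end

section
/- Let k be a field of characteristic zero and (R,Δ) a commutative differential k-algebra with R a finitely generated (affine) k-algebra. If P is a Δ-prime ideal of R which is a locally closed point of Δ-spec R (that is, the singleton {P} is open in its closure in Δ-spec R), then P is a Δ-primitive ideal. -/
section Aux

variable {k R : Type*} [CommRing k] [CommRing R] [Algebra k R]
variable (Δ : Set (Derivation k R R))

lemma aux_deltaCore_le (J : Ideal R) : deltaCore Δ J ≤ J :=
  sSup_le fun _ hI => hI.2

lemma aux_le_deltaCore {I J : Ideal R} (hI : IsDeltaIdeal Δ I) (h : I ≤ J) :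
    I ≤ deltaCore Δ J := le_sSup ⟨hI, h⟩

lemma aux_isDeltaIdeal_bot : IsDeltaIdeal Δ (⊥ : Ideal R) := by
  intro δ _ x hx
  simp [Ideal.mem_bot] at hx ⊢
  simp [hx]

lemma aux_isDeltaIdeal_sup {I J : Ideal R} (hI : IsDeltaIdeal Δ I)
    (hJ : IsDeltaIdeal Δ J) : IsDeltaIdeal Δ (I ⊔ J) := by
  intro δ hδ x hx
  obtain ⟨a, ha, b, hb, rfl⟩ := Submodule.mem_sup.mp hx
  rw [map_add]
  exact Submodule.add_mem_sup (hI δ hδ a ha) (hJ δ hδ b hb)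

lemma aux_isDeltaIdeal_deltaCore (J : Ideal R) : IsDeltaIdeal Δ (deltaCore Δ J) := by
  intro δ hδ x hx
  have hdir : DirectedOn (· ≤ ·) {I : Ideal R | IsDeltaIdeal Δ I ∧ I ≤ J} := by
    rintro I₁ ⟨h₁, h₁'⟩ I₂ ⟨h₂, h₂'⟩
    exact ⟨I₁ ⊔ I₂, ⟨aux_isDeltaIdeal_sup Δ h₁ h₂, sup_le h₁' h₂'⟩, le_sup_left, le_sup_right⟩
  have hne : {I : Ideal R | IsDeltaIdeal Δ I ∧ I ≤ J}.Nonempty :=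
    ⟨⊥, aux_isDeltaIdeal_bot Δ, bot_le⟩
  obtain ⟨I, hI, hxI⟩ := (Submodule.mem_sSup_of_directed hne hdir).mp hx
  exact le_sSup hI (hI.1 δ hδ x hxI)

lemma aux_isDeltaIdeal_mul {I J : Ideal R} (hI : IsDeltaIdeal Δ I)
    (hJ : IsDeltaIdeal Δ J) : IsDeltaIdeal Δ (I * J) := by
  intro δ hδ x hx
  refine Submodule.mul_induction_on hx (fun a ha b hb => ?_) (fun a b ha hb => ?_)
  · rw [Derivation.leibniz]
    exact add_mem (Ideal.mul_mem_mul ha (hJ δ hδ b hb))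
      (by rw [smul_eq_mul, mul_comm b (δ a)]; exact Ideal.mul_mem_mul (hI δ hδ a ha) hb)
  · rw [map_add]; exact add_mem ha hb

lemma aux_isDeltaIdeal_top : IsDeltaIdeal Δ (⊤ : Ideal R) := fun _ _ _ _ => trivial

lemma aux_isDeltaIdeal_pow {I : Ideal R} (hI : IsDeltaIdeal Δ I) (n : ℕ) :
    IsDeltaIdeal Δ (I ^ n) := by
  induction n with
  | zero => simpa using aux_isDeltaIdeal_top Δ
  | succ n ih => rw [pow_succ]; exact aux_isDeltaIdeal_mul Δ ih hI

end Aux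

section Char0

variable {k R : Type*} [Field k] [CharZero k] [CommRing R] [Algebra k R]
variable (Δ : Set (Derivation k R R))

lemma aux_nat_div (k : Type*) [Field k] [CharZero k] [Algebra k R]
    {P : Ideal R} {m : ℕ} (hm : m ≠ 0) {z : R}
    (h : (m : R) * z ∈ P) : z ∈ P := by
  have hu : IsUnit ((m : k)) := isUnit_iff_ne_zero.mpr (Nat.cast_ne_zero.mpr hm)
  have hu' : IsUnit ((m : R)) := by
    have := hu.map (algebraMap k R)
    rwa [map_natCast] at this
  exact (Ideal.unit_mul_mem_iff_mem P hu').mp h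

lemma aux_isDeltaIdeal_radical {P : Ideal R} (hP : IsDeltaIdeal Δ P) :
    IsDeltaIdeal Δ P.radical := by
  intro δ hδ x hx
  obtain ⟨n, hn⟩ := Ideal.mem_radical_iff.mp hx
  set y := δ x with hy
  have key : ∀ i, i ≤ n → x ^ (n - i) * y ^ (2 * i) ∈ P := by
    intro i
    induction i with
    | zero => intro _; simpa using hn
    | succ i ih =>
      intro hi1
      have hc : x ^ (n - i) * y ^ (2 * i) ∈ P := ih (le_of_lt hi1)
      have hdc : δ (x ^ (n - i) * y ^ (2 * i)) * y ∈ P :=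
        Ideal.mul_mem_right _ _ (hP δ hδ _ hc)
      have expand : δ (x ^ (n - i) * y ^ (2 * i)) * y
          = (2 * i : ℕ) • (x ^ (n - i) * y ^ (2 * i - 1) * δ y * y)
            + (n - i : ℕ) • (x ^ (n - i - 1) * y ^ (2 * i + 2)) := by
        rw [Derivation.leibniz, Derivation.leibniz_pow, Derivation.leibniz_pow]
        simp only [smul_eq_mul, nsmul_eq_mul]
        push_cast
        ring
      have h1 : (2 * i : ℕ) • (x ^ (n - i) * y ^ (2 * i - 1) * δ y * y) ∈ P := by
        rcases Nat.eq_zero_or_pos i with h0 | hpos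
        · subst h0; simp
        · obtain ⟨j, rfl⟩ := Nat.exists_eq_add_of_le hpos
          have e1 : 2 * (1 + j) - 1 = 2 * j + 1 := by omega
          have e2 : 2 * (1 + j) = 2 * j + 2 := by omega
          rw [e1]
          refine nsmul_mem ?_ _
          have : x ^ (n - (1 + j)) * y ^ (2 * j + 1) * δ y * y
              = (x ^ (n - (1 + j)) * y ^ (2 * (1 + j))) * δ y := by
            rw [e2]; ring
          rw [this]
          exact Ideal.mul_mem_right _ _ hc
      have h2 : (n - i : ℕ) • (x ^ (n - i - 1) * y ^ (2 * i + 2)) ∈ P := by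
        have := Ideal.sub_mem P hdc h1
        rw [expand] at this
        simpa using this
      have hni : (n - i : ℕ) ≠ 0 := by omega
      have h3 : x ^ (n - i - 1) * y ^ (2 * i + 2) ∈ P := by
        apply aux_nat_div k hni
        rwa [nsmul_eq_mul] at h2
      have e3 : n - (i + 1) = n - i - 1 := by omega
      have e4 : 2 * (i + 1) = 2 * i + 2 := by omega
      rw [e3, e4]
      exact h3
  have := key n le_rfl
  simp only [Nat.sub_self, pow_zero, one_mul] at this
  exact Ideal.mem_radical_iff.mpr ⟨2 * n, this⟩

lemma aux_radical_le [IsNoetherianRing R]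
    {P : Ideal R} (hP : IsDeltaPrime Δ P) : P.radical ≤ P := by
  obtain ⟨n, hn⟩ := Ideal.exists_radical_pow_le_of_fg P (IsNoetherian.noetherian _)
  induction n with
  | zero => exact absurd (top_le_iff.mp (by simpa using hn)) hP.1
  | succ n ih =>
    rcases hP.2.2 _ _ (aux_isDeltaIdeal_radical Δ hP.2.1)
      (aux_isDeltaIdeal_pow Δ (aux_isDeltaIdeal_radical Δ hP.2.1) n)
      (by rw [← pow_succ']; exact hn) with h1 | h1
    · exact h1
    · exact ih h1

end Char0

/-- If `R` is an affine (finitely generated) `k`-algebra and `P` is a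
`Δ`-prime ideal of `R` which is a locally closed point of `Δ-spec R` (i.e. `{P}` is the
intersection of a closed set and an open set of the Zariski topology on `Δ-spec R`,
equivalently `{P}` is open in its closure), then `P` is `Δ`-primitive. -/
theorem isDeltaPrimitive_of_locallyClosed
    {k R : Type*} [Field k] [CharZero k] [CommRing R] [Algebra k R]
    [Algebra.FiniteType k R]
    (Δ : Set (Derivation k R R)) (P : Ideal R) (hP : IsDeltaPrime Δ P)
    (hlc : ∃ I : Ideal R,
      {Q : Ideal R | IsDeltaPrime Δ Q ∧ P ≤ Q ∧ ¬ I ≤ Q} = {P}) :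
    IsDeltaPrimitive Δ P := by
  haveI : IsNoetherianRing R := Algebra.FiniteType.isNoetherianRing k R
  haveI : IsJacobsonRing R := isJacobsonRing_of_finiteType (A := k)
  obtain ⟨I, hI⟩ := hlc
  have hPmem : P ∈ {Q : Ideal R | IsDeltaPrime Δ Q ∧ P ≤ Q ∧ ¬ I ≤ Q} := by
    rw [hI]; rfl
  obtain ⟨-, -, hIP⟩ := hPmem
  have hrad : P.radical = P := le_antisymm (aux_radical_le Δ hP) Ideal.le_radical
  have hIjac : ¬ I ≤ P.jacobson := by
    rw [← Ideal.radical_eq_jacobson, hrad]; exact hIP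
  obtain ⟨a, haI, haJ⟩ := SetLike.not_le_iff_exists.mp hIjac
  rw [Ideal.jacobson, Submodule.mem_sInf] at haJ
  push_neg at haJ
  obtain ⟨M, ⟨hPM, hMmax⟩, haM⟩ := haJ
  refine ⟨M, hMmax, ?_⟩
  have hcore_le : deltaCore Δ M ≤ M := aux_deltaCore_le Δ M
  have hQprime : IsDeltaPrime Δ (deltaCore Δ M) := by
    refine ⟨fun h => hMmax.ne_top (top_le_iff.mp (h ▸ hcore_le)),
      aux_isDeltaIdeal_deltaCore Δ M, fun I' J' hI' hJ' hmul => ?_⟩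
    rcases (Ideal.IsPrime.mul_le hMmax.isPrime).mp (hmul.trans hcore_le) with h | h
    · exact Or.inl (aux_le_deltaCore Δ hI' h)
    · exact Or.inr (aux_le_deltaCore Δ hJ' h)
  have hPQ : P ≤ deltaCore Δ M := aux_le_deltaCore Δ hP.2.1 hPM
  have hIQ : ¬ I ≤ deltaCore Δ M := fun h => haM (hcore_le (h haI))
  have hsing : deltaCore Δ M ∈ ({P} : Set (Ideal R)) := by
    rw [← hI]; exact ⟨hQprime, hPQ, hIQ⟩
  exact Set.mem_singleton_iff.mp hsing
end

section
/- Let k be a field of characteristic zero, G an abelian group, and (R,Δ) a commutative G-graded differential k-algebra such that R is a graded field. Then contraction I ↦ I ∩ Z_Δ(R) and extension J ↦ RJ are mutually inverse, inclusion-preserving bijections between the set of Δ-ideals of R and the set of ideals of Z_Δ(R); in particular, I = R·(I ∩ Z_Δ(R)) for every Δ-ideal I of R, and J = (RJ) ∩ Z_Δ(R) for every ideal J of Z_Δ(R). -/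
/-- The `Δ`-center of `R`: elements annihilated by every derivation in `Δ`. -/
def deltaCenter {k R : Type*} [CommRing k] [CommRing R] [Algebra k R]
    (Δ : Set (Derivation k R R)) : Subalgebra k R where
  carrier := {r : R | ∀ δ ∈ Δ, δ r = 0}
  mul_mem' := by
    intro a b ha hb δ hδ
    rw [Derivation.leibniz, ha δ hδ, hb δ hδ, smul_zero, smul_zero, add_zero]
  add_mem' := by
    intro a b ha hb δ hδ
    rw [map_add, ha δ hδ, hb δ hδ, add_zero]
  algebraMap_mem' := by
    intro c δ hδ
    simp

/-- The homogeneous `k`-derivations of degree `d` with respect to a grading `𝒜`: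
those `δ` with `δ(R_g) ⊆ R_{g+d}` for all `g`. -/
def homogeneousDerivations {k R G : Type*} [CommRing k] [CommRing R] [Algebra k R]
    [AddCommGroup G] (𝒜 : G → Submodule k R) (d : G) :
    Submodule k (Derivation k R R) where
  carrier := {δ : Derivation k R R | ∀ g : G, ∀ x ∈ 𝒜 g, δ x ∈ 𝒜 (g + d)}
  add_mem' := by
    intro a b ha hb g x hx
    rw [Derivation.add_apply]
    exact Submodule.add_mem _ (ha g x hx) (hb g x hx)
  zero_mem' := by
    intro g x hx
    simp
  smul_mem' := by
    intro c δ hδ g x hx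
    rw [Derivation.smul_apply]
    exact Submodule.smul_mem _ c (hδ g x hx)

/-- `R` is a graded field with respect to `𝒜`: a domain in which every nonzero
homogeneous element is invertible. -/
def IsGradedField {k R G : Type*} [CommRing k] [CommRing R] [Algebra k R]
    (𝒜 : G → Submodule k R) : Prop :=
  IsDomain R ∧ ∀ (g : G) (x : R), x ∈ 𝒜 g → x ≠ 0 → IsUnit x


open DirectSum GradedRing

namespace GradedRing

variable {R G σ : Type*} [CommRing R] [AddCommGroup G] [DecidableEq G] [SetLike σ R]
  [AddSubgroupClass σ R] (𝒜 : G → σ) [GradedRing 𝒜]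

theorem proj_mem (g : G) (x : R) : proj 𝒜 g x ∈ 𝒜 g := SetLike.coe_mem _

theorem proj_of_mem_same {x : R} {g : G} (hx : x ∈ 𝒜 g) : proj 𝒜 g x = x :=
  decompose_of_mem_same 𝒜 hx

theorem proj_of_mem_ne {x : R} {g h : G} (hx : x ∈ 𝒜 g) (hgh : g ≠ h) : proj 𝒜 h x = 0 :=
  decompose_of_mem_ne 𝒜 hx hgh

theorem eq_zero_of_forall_proj_eq_zero {x : R} (h : ∀ g, proj 𝒜 g x = 0) : x = 0 := by
  apply (decompose 𝒜).injective
  ext g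
  simpa using h g

theorem proj_mul_add_of_left_mem {a : R} {i : G} (ha : a ∈ 𝒜 i) (j : G) (b : R) :
    proj 𝒜 (i + j) (a * b) = a * proj 𝒜 j b :=
  coe_decompose_mul_add_of_left_mem 𝒜 ha

theorem proj_mul_of_neg_mem {v : R} {g : G} (hv : v ∈ 𝒜 (-g)) (h : G) (x : R) :
    proj 𝒜 h (v * x) = v * proj 𝒜 (g + h) x := by
  simpa using proj_mul_add_of_left_mem 𝒜 hv (g + h) x

theorem exists_mem_neg_mul_eq_one {a : R} {g : G} (ha : a ∈ 𝒜 g) (hu : IsUnit a) :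
    ∃ b ∈ 𝒜 (-g), a * b = 1 := by
  obtain ⟨u, rfl⟩ := hu
  refine ⟨proj 𝒜 (-g) ↑u⁻¹, proj_mem 𝒜 _ _, ?_⟩
  rw [← proj_mul_add_of_left_mem 𝒜 ha, add_neg_cancel, Units.mul_inv,
    proj_of_mem_same 𝒜 (SetLike.one_mem_graded 𝒜)]

end GradedRing

section DeltaCenter

variable {k R G : Type*} [CommRing k] [CommRing R] [Algebra k R] [AddCommGroup G]
  (𝒜 : G → Submodule k R)

theorem mem_deltaCenter_of_mul_eq_one {Δ : Set (Derivation k R R)} {z w : R}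
    (hz : z ∈ deltaCenter Δ) (hzw : z * w = 1) : w ∈ deltaCenter Δ := by
  intro δ hδ
  have hδzw : z * δ w = 0 := by
    simpa [hz δ hδ] using congrArg δ hzw
  calc δ w = w * (z * δ w) := by rw [← mul_assoc, mul_comm w z, hzw, one_mul]
    _ = 0 := by rw [hδzw, mul_zero]

theorem mem_deltaCenter_of_homogeneous {Δ : Submodule k (Derivation k R R)}
    (hΔ : Δ = ⨆ d : G, (homogeneousDerivations 𝒜 d ⊓ Δ)) {x : R}
    (hx : ∀ d : G, ∀ δ ∈ homogeneousDerivations 𝒜 d ⊓ Δ, δ x = 0) :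
    x ∈ deltaCenter (Δ : Set (Derivation k R R)) := by
  intro δ hδ
  rw [SetLike.mem_coe, hΔ] at hδ
  induction hδ using Submodule.iSup_induction' with
  | mem d δ hδ => exact hx d δ hδ
  | zero => rfl
  | add δ δ' _ _ hδ hδ' => rw [Derivation.add_apply, hδ, hδ', add_zero]

variable [DecidableEq G] [GradedAlgebra 𝒜]

theorem map_proj_of_mem_homogeneousDerivations {d : G} {δ : Derivation k R R}
    (hδ : δ ∈ homogeneousDerivations 𝒜 d) (g : G) (x : R) :
    δ (proj 𝒜 g x) = proj 𝒜 (g + d) (δ x) := by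
  induction x using DirectSum.Decomposition.inductionOn 𝒜 with
  | zero => simp
  | @homogeneous i x =>
    have hδx : δ x ∈ 𝒜 (i + d) := hδ i x x.2
    obtain rfl | hig := eq_or_ne i g
    · rw [proj_of_mem_same 𝒜 x.2, proj_of_mem_same 𝒜 hδx]
    · rw [proj_of_mem_ne 𝒜 x.2 hig, proj_of_mem_ne 𝒜 hδx (by simpa using hig), map_zero]
  | add x y hx hy => simp only [map_add, hx, hy]

theorem proj_sub_mul_map_of_mem_homogeneousDerivations {d : G} {δ : Derivation k R R}
    (hδ : δ ∈ homogeneousDerivations 𝒜 d) {a : R} (ha : a ∈ 𝒜 (-d)) (h : G) (x : R) :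
    proj 𝒜 h (x - a * δ x) = proj 𝒜 h x - a * δ (proj 𝒜 h x) := by
  rw [map_sub, proj_mul_of_neg_mem 𝒜 ha, add_comm, map_proj_of_mem_homogeneousDerivations 𝒜 hδ]

theorem isHomogeneous_deltaCenter {Δ : Submodule k (Derivation k R R)}
    (hΔ : Δ = ⨆ d : G, (homogeneousDerivations 𝒜 d ⊓ Δ)) :
    SetLike.IsHomogeneous 𝒜 (deltaCenter (Δ : Set (Derivation k R R))) := fun g z hz =>
  mem_deltaCenter_of_homogeneous 𝒜 hΔ fun d δ hδ => by
    change δ (proj 𝒜 g z) = 0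
    rw [map_proj_of_mem_homogeneousDerivations 𝒜 (Submodule.mem_inf.1 hδ).1,
      hz δ (Submodule.mem_inf.1 hδ).2, map_zero]

end DeltaCenter

theorem isDeltaIdeal_span_deltaCenter {k R : Type*} [CommRing k] [CommRing R] [Algebra k R]
    (Δ : Set (Derivation k R R)) (J : Set (deltaCenter Δ)) :
    IsDeltaIdeal Δ (Ideal.span (Subtype.val '' J)) := by
  intro δ hδ x hx
  induction hx using Submodule.span_induction with
  | mem _ hz =>
    obtain ⟨z, -, rfl⟩ := hz
    rw [z.2 δ hδ]
    exact Ideal.zero_mem _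
  | zero => rw [map_zero]; exact Ideal.zero_mem _
  | add _ _ _ _ hx hy => rw [map_add]; exact Ideal.add_mem _ hx hy
  | smul r x hx hδx =>
    rw [smul_eq_mul, Derivation.leibniz, smul_eq_mul, smul_eq_mul]
    exact Ideal.add_mem _ (Ideal.mul_mem_left _ _ hδx) (Ideal.mul_mem_right _ _ hx)

section DeltaIdeal

variable {k R G : Type*} [CommRing k] [CommRing R] [Algebra k R] [AddCommGroup G]
  [DecidableEq G] (𝒜 : G → Submodule k R) [GradedAlgebra 𝒜] {Δ : Submodule k (Derivation k R R)}

theorem IsDeltaIdeal.mem_of_proj_zero_eq_one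
    (hΔ : Δ = ⨆ d : G, (homogeneousDerivations 𝒜 d ⊓ Δ))
    (hunit : ∀ (g : G) (x : R), x ∈ 𝒜 g → x ≠ 0 → IsUnit x)
    {I E : Ideal R} (hI : IsDeltaIdeal (Δ : Set (Derivation k R R)) I)
    (hE : ∀ z ∈ I, z ∈ deltaCenter (Δ : Set (Derivation k R R)) → z ∈ E) {T : Finset G}
    (ih : ∀ y ∈ I, ∀ T' : Finset G, T'.card < T.card → (∀ g ∉ T', proj 𝒜 g y = 0) → y ∈ E)
    {x : R} (hxI : x ∈ I) (hxT : ∀ g ∉ T, proj 𝒜 g x = 0) (hx1 : proj 𝒜 0 x = 1) : x ∈ E := by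
  by_cases hZ : ∀ d : G, ∀ δ ∈ homogeneousDerivations 𝒜 d ⊓ Δ, δ x = 0
  · exact hE x hxI (mem_deltaCenter_of_homogeneous 𝒜 hΔ hZ)
  push Not at hZ
  obtain ⟨d, δ, hδ, hδx⟩ := hZ
  obtain ⟨hδ𝒜, hδΔ⟩ := Submodule.mem_inf.1 hδ
  have hproj_δ (h : G) : proj 𝒜 h (δ x) = δ (proj 𝒜 (h - d) x) := by
    rw [map_proj_of_mem_homogeneousDerivations 𝒜 hδ𝒜, sub_add_cancel]
  obtain ⟨g₂, hg₂⟩ : ∃ g, δ (proj 𝒜 g x) ≠ 0 := by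
    by_contra! h
    exact hδx (eq_zero_of_forall_proj_eq_zero 𝒜 fun g => (hproj_δ g).trans (h _))
  have hg₂T : g₂ ∈ T := by
    by_contra hg₂T
    rw [hxT g₂ hg₂T, map_zero] at hg₂
    exact hg₂ rfl
  have h0T : (0 : G) ∈ T := by
    by_contra h0T
    exact hδx (eq_of_zero_eq_one (hx1 ▸ hxT 0 h0T).symm _ _)
  have hδx_deg : δ (proj 𝒜 g₂ x) ∈ 𝒜 (g₂ + d) := hδ𝒜 g₂ _ (proj_mem 𝒜 g₂ x)
  obtain ⟨w, hw, hδw⟩ := exists_mem_neg_mul_eq_one 𝒜 hδx_deg (hunit _ _ hδx_deg hg₂)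
  have ha : proj 𝒜 g₂ x * w ∈ 𝒜 (-d) := by
    simpa using SetLike.mul_mem_graded (proj_mem 𝒜 g₂ x) hw
  have hδxE := ih _ (hI δ hδΔ x hxI) ((T.erase 0).image (· + d))
    (Finset.card_image_le.trans_lt (Finset.card_erase_lt_of_mem h0T)) fun h hh => by
      rw [hproj_δ]
      by_cases hh0 : h - d = 0
      · rw [hh0, hx1, δ.map_one_eq_zero]
      · rw [hxT, map_zero]
        exact fun hT => hh (Finset.mem_image.2
          ⟨h - d, Finset.mem_erase.2 ⟨hh0, hT⟩, sub_add_cancel h d⟩)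
  have hyE := ih (x - proj 𝒜 g₂ x * w * δ x) (I.sub_mem hxI (I.mul_mem_left _ (hI δ hδΔ x hxI)))
    (T.erase g₂) (Finset.card_erase_lt_of_mem hg₂T) fun h hh => by
      rw [proj_sub_mul_map_of_mem_homogeneousDerivations 𝒜 hδ𝒜 ha]
      by_cases hhg₂ : h = g₂
      · rw [hhg₂, mul_assoc, mul_comm w, hδw, mul_one, sub_self]
      · rw [hxT h fun hT => hh (Finset.mem_erase.2 ⟨hhg₂, hT⟩), map_zero, mul_zero, sub_zero]
  simpa using E.add_mem hyE (E.mul_mem_left (proj 𝒜 g₂ x * w) hδxE)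

theorem IsDeltaIdeal.le_of_forall_mem_deltaCenter
    (hΔ : Δ = ⨆ d : G, (homogeneousDerivations 𝒜 d ⊓ Δ))
    (hunit : ∀ (g : G) (x : R), x ∈ 𝒜 g → x ≠ 0 → IsUnit x)
    {I E : Ideal R} (hI : IsDeltaIdeal (Δ : Set (Derivation k R R)) I)
    (hE : ∀ z ∈ I, z ∈ deltaCenter (Δ : Set (Derivation k R R)) → z ∈ E) : I ≤ E := by
  classical
  intro x hxI
  obtain ⟨T, hxT⟩ : ∃ T : Finset G, ∀ g ∉ T, proj 𝒜 g x = 0 :=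
    ⟨(decompose 𝒜 x).support, fun g hg => by simpa [GradedRing.mem_support_iff] using hg⟩
  induction hn : T.card using Nat.strong_induction_on generalizing T x with
  | _ n ih =>
  by_cases hx0 : x = 0
  · exact hx0 ▸ E.zero_mem
  obtain ⟨g, hg⟩ : ∃ g, proj 𝒜 g x ≠ 0 := by
    by_contra! h
    exact hx0 (eq_zero_of_forall_proj_eq_zero 𝒜 h)
  obtain ⟨v, hv, hgv⟩ :=
    exists_mem_neg_mul_eq_one 𝒜 (proj_mem 𝒜 g x) (hunit _ _ (proj_mem 𝒜 g x) hg)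
  have hx : x = proj 𝒜 g x * (v * x) := by rw [← mul_assoc, hgv, one_mul]
  rw [hx]
  refine E.mul_mem_left _ (hI.mem_of_proj_zero_eq_one 𝒜 hΔ hunit hE (T := T.image (-g + ·))
    (fun y hy T' hT' hyT' => ih T'.card (hn ▸ hT'.trans_le Finset.card_image_le) hy T' hyT' rfl)
    (I.mul_mem_left v hxI) (fun h hh => ?_) ?_)
  · rw [proj_mul_of_neg_mem 𝒜 hv, hxT, mul_zero]
    exact fun hT => hh (Finset.mem_image.2 ⟨g + h, hT, neg_add_cancel_left g h⟩)
  · rw [proj_mul_of_neg_mem 𝒜 hv, add_zero, mul_comm, hgv]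

end DeltaIdeal

theorem Subalgebra.comap_span_eq_of_complement {k R : Type*} [CommRing k] [CommRing R]
    [Algebra k R] (S : Subalgebra k R) (M : Submodule S R) (hdisj : ∀ x ∈ M, x ∈ S → x = 0)
    (hsup : ∀ r : R, ∃ m ∈ M, r - m ∈ S) (J : Ideal S) :
    Ideal.comap S.val.toRingHom (Ideal.span (Subtype.val '' (J : Set S))) = J := by
  refine le_antisymm (fun ζ hζ => ?_) (fun j hj => Ideal.subset_span ⟨j, hj, rfl⟩)
  have key : ∀ a ∈ Ideal.span (Subtype.val '' (J : Set S)), ∀ r : R,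
      ∃ j ∈ J, r * a - j ∈ M := by
    intro a ha
    induction ha using Submodule.span_induction with
    | mem _ ha =>
      obtain ⟨j, hj, rfl⟩ := ha
      intro r
      obtain ⟨m, hm, hrm⟩ := hsup r
      refine ⟨⟨r - m, hrm⟩ * j, J.mul_mem_left _ hj, ?_⟩
      convert M.smul_mem j hm using 1
      simp only [Subalgebra.coe_mul, Subalgebra.smul_def, smul_eq_mul]
      ring
    | zero => exact fun _ => ⟨0, J.zero_mem, by simp⟩
    | add a b _ _ ha hb =>
      intro r
      obtain ⟨i, hi, hia⟩ := ha r
      obtain ⟨j, hj, hjb⟩ := hb r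
      refine ⟨i + j, J.add_mem hi hj, ?_⟩
      convert M.add_mem hia hjb using 1
      push_cast
      ring
    | smul s a _ ha =>
      intro r
      simpa only [smul_eq_mul, ← mul_assoc] using ha (r * s)
  obtain ⟨j, hj, hζj⟩ := key _ hζ 1
  rw [one_mul] at hζj
  have : (ζ : R) - j = 0 := hdisj _ hζj (S.sub_mem ζ.2 j.2)
  rwa [show ζ = j from Subtype.ext (sub_eq_zero.1 this)]

section Complement

variable {k R G : Type*} [CommRing k] [CommRing R] [Algebra k R] [AddCommGroup G]
  [DecidableEq G] (𝒜 : G → Submodule k R) [GradedAlgebra 𝒜] (S : Subalgebra k R)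

def IsHomogeneousDisjoint (M : Submodule S R) : Prop :=
  SetLike.IsHomogeneous 𝒜 M ∧ ∀ x ∈ M, x ∈ S → x = 0

variable {𝒜 S}

theorem exists_maximal_isHomogeneousDisjoint :
    ∃ M, Maximal (IsHomogeneousDisjoint 𝒜 S) M := by
  have hbot : IsHomogeneousDisjoint 𝒜 S ⊥ :=
    ⟨fun g x hx => by simp [(Submodule.mem_bot S).1 hx], fun x hx _ => (Submodule.mem_bot S).1 hx⟩
  obtain ⟨M, -, hM⟩ := zorn_le_nonempty₀ {M | IsHomogeneousDisjoint 𝒜 S M}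
    (fun c hc hchain N hN => by
      refine ⟨sSup c, ⟨fun g x hx => ?_, fun x hx hxS => ?_⟩, fun _ => le_sSup⟩ <;>
        obtain ⟨P, hP, hxP⟩ := (Submodule.mem_sSup_of_directed ⟨N, hN⟩ hchain.directedOn).1 hx
      · exact le_sSup hP ((hc hP).1 g hxP)
      · exact (hc hP).2 x hxP hxS) ⊥ hbot
  exact ⟨M, hM⟩

theorem SetLike.IsHomogeneous.sup_span_singleton (hS : SetLike.IsHomogeneous 𝒜 S)
    {M : Submodule S R} (hM : SetLike.IsHomogeneous 𝒜 M) {x : R} {g : G} (hx : x ∈ 𝒜 g) :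
    SetLike.IsHomogeneous 𝒜 (M ⊔ Submodule.span S {x}) := by
  intro h y hy
  obtain ⟨m, hm, _, hzx, rfl⟩ := Submodule.mem_sup.1 hy
  obtain ⟨z, rfl⟩ := Submodule.mem_span_singleton.1 hzx
  have hproj : proj 𝒜 h (z • x) = (⟨proj 𝒜 (-g + h) z, hS _ z.2⟩ : S) • x := by
    simpa [Subalgebra.smul_def, mul_comm x] using proj_mul_add_of_left_mem 𝒜 hx (-g + h) (z : R)
  change proj 𝒜 h (m + z • x) ∈ _
  rw [map_add]
  exact Submodule.add_mem_sup (hM h hm)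
    (hproj ▸ Submodule.smul_mem _ _ (Submodule.mem_span_singleton_self x))

theorem IsHomogeneousDisjoint.exists_sub_mem_of_mem_sup_span_singleton
    (hS : SetLike.IsHomogeneous 𝒜 S)
    (hS_inv : ∀ g, ∀ z ∈ S, z ∈ 𝒜 g → z ≠ 0 → ∃ w ∈ S, z * w = 1) {M : Submodule S R}
    (hM : IsHomogeneousDisjoint 𝒜 S M) {x : R} {g : G} (hx : x ∈ 𝒜 g)
    {y : R} (hy : y ∈ M ⊔ Submodule.span S {x}) (hyS : y ∈ S) (hy0 : y ≠ 0) :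
    ∃ m ∈ M, x - m ∈ S := by
  obtain ⟨m, hm, _, hzx, rfl⟩ := Submodule.mem_sup.1 hy
  obtain ⟨z, rfl⟩ := Submodule.mem_span_singleton.1 hzx
  obtain ⟨g', hg'⟩ : ∃ g', proj 𝒜 g' (z : R) ≠ 0 := by
    by_contra! hz
    have hz0 : z = 0 := Subtype.ext (eq_zero_of_forall_proj_eq_zero 𝒜 hz)
    rw [hz0, zero_smul, add_zero] at hy0 hyS
    exact hy0 (hM.2 m hm hyS)
  obtain ⟨w, hwS, hw⟩ := hS_inv g' (proj 𝒜 g' z) (hS g' z.2) (SetLike.coe_mem _) hg'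
  -- `x = w (m + z • x - m)_{g + g'}`, where `w` inverts `z_{g'}`
  have hcomp : proj 𝒜 (g + g') (m + z • x) = proj 𝒜 (g + g') m + proj 𝒜 g' (z : R) * x := by
    rw [map_add, Subalgebra.smul_def, smul_eq_mul, mul_comm (z : R),
      proj_mul_add_of_left_mem 𝒜 hx, mul_comm]
  refine ⟨(⟨-w, S.neg_mem hwS⟩ : S) • proj 𝒜 (g + g') m, M.smul_mem _ (hM.1 _ hm), ?_⟩
  convert S.mul_mem hwS (hS (g + g') hyS) using 1
  change _ = w * proj 𝒜 (g + g') (m + z • x)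
  rw [hcomp, Subalgebra.smul_def, smul_eq_mul]
  linear_combination (-x) * hw

theorem IsHomogeneousDisjoint.exists_sub_mem_of_maximal (hS : SetLike.IsHomogeneous 𝒜 S)
    (hS_inv : ∀ g, ∀ z ∈ S, z ∈ 𝒜 g → z ≠ 0 → ∃ w ∈ S, z * w = 1) {M : Submodule S R}
    (hM : Maximal (IsHomogeneousDisjoint 𝒜 S) M) (r : R) : ∃ m ∈ M, r - m ∈ S := by
  induction r using DirectSum.Decomposition.inductionOn 𝒜 with
  | zero => exact ⟨0, M.zero_mem, by simp [S.zero_mem]⟩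
  | @homogeneous g x =>
    by_contra hx
    have hsup : IsHomogeneousDisjoint 𝒜 S (M ⊔ Submodule.span S {(x : R)}) := by
      refine ⟨SetLike.IsHomogeneous.sup_span_singleton hS hM.1.1 x.2, fun y hy hyS => ?_⟩
      by_contra hy0
      exact hx (hM.1.exists_sub_mem_of_mem_sup_span_singleton hS hS_inv x.2 hy hyS hy0)
    have hxM : (x : R) ∈ M :=
      hM.2 hsup le_sup_left (Submodule.mem_sup_right (Submodule.mem_span_singleton_self _))
    exact hx ⟨x, hxM, by simp [S.zero_mem]⟩
  | add r r' hr hr' =>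
    obtain ⟨m, hm, hrm⟩ := hr
    obtain ⟨m', hm', hrm'⟩ := hr'
    exact ⟨m + m', M.add_mem hm hm', by convert S.add_mem hrm hrm' using 1; ring⟩

end Complement

theorem deltaIdeals_correspond_to_center_ideals_general
    {k R G : Type*} [Field k] [CommRing R] [Algebra k R]
    [AddCommGroup G] [DecidableEq G]
    (𝒜 : G → Submodule k R) [GradedAlgebra 𝒜]
    (Δ : Submodule k (Derivation k R R))
    (hΔ : Δ = ⨆ d : G, (homogeneousDerivations 𝒜 d ⊓ Δ))
    (hgf : IsGradedField 𝒜) :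
    -- the extension of any ideal of Z_Δ(R) is a Δ-ideal of R
    (∀ J : Ideal (deltaCenter (Δ : Set (Derivation k R R))),
      IsDeltaIdeal (Δ : Set (Derivation k R R))
        (Ideal.span (Subtype.val '' (J : Set (deltaCenter (Δ : Set (Derivation k R R))))))) ∧
    -- extension ∘ contraction is the identity on Δ-ideals of R
    (∀ I : Ideal R, IsDeltaIdeal (Δ : Set (Derivation k R R)) I →
      Ideal.span (Subtype.val ''
        ((Ideal.comap (deltaCenter (Δ : Set (Derivation k R R))).val.toRingHom I) :
          Set (deltaCenter (Δ : Set (Derivation k R R))))) = I) ∧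
    -- contraction ∘ extension is the identity on ideals of Z_Δ(R)
    (∀ J : Ideal (deltaCenter (Δ : Set (Derivation k R R))),
      Ideal.comap (deltaCenter (Δ : Set (Derivation k R R))).val.toRingHom
        (Ideal.span (Subtype.val ''
          (J : Set (deltaCenter (Δ : Set (Derivation k R R)))))) = J) := by
  obtain ⟨M, hM⟩ := exists_maximal_isHomogeneousDisjoint (𝒜 := 𝒜)
    (S := deltaCenter (Δ : Set (Derivation k R R)))
  have hZ_inv (g : G) (z : R) (hz : z ∈ deltaCenter (Δ : Set (Derivation k R R))) (hzg : z ∈ 𝒜 g)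
      (hz0 : z ≠ 0) : ∃ w ∈ deltaCenter (Δ : Set (Derivation k R R)), z * w = 1 := by
    obtain ⟨w, hw⟩ := (hgf.2 g z hzg hz0).exists_right_inv
    exact ⟨w, mem_deltaCenter_of_mul_eq_one hz hw, hw⟩
  refine ⟨fun J => isDeltaIdeal_span_deltaCenter _ _, fun I hI => le_antisymm ?_ ?_,
    Subalgebra.comap_span_eq_of_complement _ M hM.1.2
      (IsHomogeneousDisjoint.exists_sub_mem_of_maximal (isHomogeneous_deltaCenter 𝒜 hΔ) hZ_inv hM)⟩
  · exact Ideal.span_le.2 fun _ ⟨z, hz, hzx⟩ => hzx ▸ hz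
  · exact hI.le_of_forall_mem_deltaCenter 𝒜 hΔ hgf.2 fun z hzI hzZ =>
      Ideal.subset_span ⟨⟨z, hzZ⟩, hzI, rfl⟩

/-- Let `(R,Δ)` be a commutative `G`-graded differential `k`-algebra
with `R` a graded field.  Then contraction `I ↦ I ∩ Z_Δ(R)` and extension `J ↦ RJ` are
mutually inverse, inclusion-preserving bijections between the `Δ`-ideals of `R` and the
ideals of `Z_Δ(R)`. -/
theorem deltaIdeals_correspond_to_center_ideals
    {k R G : Type*} [Field k] [CharZero k] [CommRing R] [Algebra k R]
    [AddCommGroup G] [DecidableEq G]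
    (𝒜 : G → Submodule k R) [GradedAlgebra 𝒜]
    (Δ : Submodule k (Derivation k R R))
    (hΔ : Δ = ⨆ d : G, (homogeneousDerivations 𝒜 d ⊓ Δ))
    (hgf : IsGradedField 𝒜) :
    -- the extension of any ideal of Z_Δ(R) is a Δ-ideal of R
    (∀ J : Ideal (deltaCenter (Δ : Set (Derivation k R R))),
      IsDeltaIdeal (Δ : Set (Derivation k R R))
        (Ideal.span (Subtype.val '' (J : Set (deltaCenter (Δ : Set (Derivation k R R))))))) ∧
    -- extension ∘ contraction is the identity on Δ-ideals of R
    (∀ I : Ideal R, IsDeltaIdeal (Δ : Set (Derivation k R R)) I →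
      Ideal.span (Subtype.val ''
        ((Ideal.comap (deltaCenter (Δ : Set (Derivation k R R))).val.toRingHom I) :
          Set (deltaCenter (Δ : Set (Derivation k R R))))) = I) ∧
    -- contraction ∘ extension is the identity on ideals of Z_Δ(R)
    (∀ J : Ideal (deltaCenter (Δ : Set (Derivation k R R))),
      Ideal.comap (deltaCenter (Δ : Set (Derivation k R R))).val.toRingHom
        (Ideal.span (Subtype.val ''
          (J : Set (deltaCenter (Δ : Set (Derivation k R R)))))) = J) :=
  deltaIdeals_correspond_to_center_ideals_general 𝒜 Δ hΔ hgf
end
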